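/- Double-max duality (primal to dual direction): If ζ̄ ∈ 𝓢ₐ⁻ is a critical point of Π^d and x̄ = Gₐ(ζ̄)⁻¹f is a local maximizer of Π on ℝⁿ, then ζ̄ is a local maximizer of Π^d on 𝓢ₐ⁻, and Π(x̄) = Π^d(ζ̄). -/

import Mathlib

/-!
Put `ξᵢ(x) = ½xᵀQᵢx + dᵢ` and `ηᵢ(x) = ½xᵀBᵢx + cᵢ`. The total complementary function
`Ξ(x, ζ) = ½xᵀGₐ(ζ)x − fᵀx − V₁*(τ) − V₂*(σ)` equals
`½xᵀAx − fᵀx + (τᵀξ(x) − V₁♯(τ)) + (σᵀη(x) − V₂♯(σ))`, where `V₁♯` and `V₂♯` are the convex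
conjugates of `ξ ↦ β⁻¹ log(1 + Σ exp(βξᵢ))` and `η ↦ Σ αᵢηᵢ²/2`. The Fenchel–Young inequalities
(Jensen for `log` in the first case) give `Ξ(x, ζ) ≤ Π(x)` on `𝓔ₐ*`, and `Π^d(ζ) = Ξ(Gₐ(ζ)⁻¹f, ζ)`
because `Gₐ(ζ)x = f` at that point. Since `Gₐ(ζ̄)` is symmetric, the criticality conditions are
exactly the equality cases of both Fenchel–Young inequalities at `x̄`, so `Π(x̄) = Π^d(ζ̄)`.
Finally `ζ ↦ Gₐ(ζ)⁻¹f` is continuous at `ζ̄`, so for `ζ ∈ 𝓢ₐ` near `ζ̄`,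
`Π^d(ζ) ≤ Π(Gₐ(ζ)⁻¹f) ≤ Π(x̄) = Π^d(ζ̄)`.
-/

open Matrix

section FenchelYoung

variable {ι : Type*} [Fintype ι]

/-- The negative entropy of the probability vector `(τ, 1 - ∑ i, τ i)`. -/
noncomputable def negEntropy (τ : ι → ℝ) : ℝ :=
  ∑ i, τ i * Real.log (τ i) + (1 - ∑ i, τ i) * Real.log (1 - ∑ i, τ i)

theorem sum_mul_sub_negEntropy_le {β : ℝ} (hβ : 0 < β) {τ : ι → ℝ} (hτ : ∀ i, 0 < τ i)
    (hτ1 : ∑ i, τ i < 1) (ξ : ι → ℝ) :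
    ∑ i, τ i * ξ i - (1/β) * negEntropy τ
      ≤ (1/β) * Real.log (1 + ∑ i, Real.exp (β * ξ i)) := by
  have hτ₀ : 0 < 1 - ∑ i, τ i := sub_pos.mpr hτ1
  have jensen := strictConcaveOn_log_Ioi.concaveOn.map_add_sum_le (t := Finset.univ)
    (w := τ) (p := fun i => Real.exp (β * ξ i) / τ i) (v := 1 - ∑ i, τ i)
    (q := 1 / (1 - ∑ i, τ i)) (fun i _ => (hτ i).le) (by simp)
    (fun i _ => by have := hτ i; simp; positivity) hτ₀.le (by simpa using hτ₀)
  have lhs : (1 - ∑ i, τ i) • Real.log (1 / (1 - ∑ i, τ i))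
      + ∑ i, τ i • Real.log (Real.exp (β * ξ i) / τ i)
      = β * ∑ i, τ i * ξ i - negEntropy τ := by
    have hsum : ∑ i, τ i * (β * ξ i - Real.log (τ i))
        = β * ∑ i, τ i * ξ i - ∑ i, τ i * Real.log (τ i) := by
      rw [Finset.mul_sum, ← Finset.sum_sub_distrib]
      exact Finset.sum_congr rfl fun i _ => by ring
    simp only [smul_eq_mul, Real.log_div (Real.exp_pos _).ne' (hτ _).ne', Real.log_exp,
      one_div, Real.log_inv, negEntropy, hsum]
    ring
  have rhs : (1 - ∑ i, τ i) • (1 / (1 - ∑ i, τ i)) + ∑ i, τ i • (Real.exp (β * ξ i) / τ i)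
      = 1 + ∑ i, Real.exp (β * ξ i) := by
    simp only [smul_eq_mul, mul_div_cancel₀ _ (hτ _).ne', mul_one_div_cancel hτ₀.ne']
  rw [lhs, rhs] at jensen
  have := mul_le_mul_of_nonneg_left jensen (one_div_pos.mpr hβ).le
  rwa [mul_sub, ← mul_assoc, one_div_mul_cancel hβ.ne', one_mul] at this

theorem sum_mul_sub_negEntropy_eq {β : ℝ} (hβ : β ≠ 0) {τ : ι → ℝ} (hτ : ∀ i, 0 < τ i)
    (hτ1 : ∑ i, τ i < 1) {ξ : ι → ℝ}
    (hξ : ∀ i, ξ i = (1/β) * Real.log (τ i / (1 - ∑ j, τ j))) :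
    ∑ i, τ i * ξ i - (1/β) * negEntropy τ
      = (1/β) * Real.log (1 + ∑ i, Real.exp (β * ξ i)) := by
  have hτ₀ : 0 < 1 - ∑ i, τ i := sub_pos.mpr hτ1
  have hexp : ∀ i, Real.exp (β * ξ i) = τ i / (1 - ∑ j, τ j) := fun i => by
    rw [hξ, ← mul_assoc, mul_one_div_cancel hβ, one_mul, Real.exp_log (div_pos (hτ i) hτ₀)]
  have hpartition : 1 + ∑ i, Real.exp (β * ξ i) = (1 - ∑ i, τ i)⁻¹ := by
    simp only [hexp, ← Finset.sum_div]
    field_simp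
    ring
  have hsum : ∑ i, τ i * ξ i
      = (1/β) * (∑ i, τ i * Real.log (τ i) - (∑ i, τ i) * Real.log (1 - ∑ i, τ i)) := by
    rw [Finset.sum_mul, ← Finset.sum_sub_distrib, Finset.mul_sum]
    refine Finset.sum_congr rfl fun i _ => ?_
    rw [hξ, Real.log_div (hτ i).ne' hτ₀.ne']
    ring
  rw [hpartition, hsum, negEntropy, Real.log_inv]
  ring

theorem mul_sub_sq_div_le {a : ℝ} (ha : 0 < a) (σ η : ℝ) :
    σ * η - σ ^ 2 / (2 * a) ≤ a / 2 * η ^ 2 := by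
  have key : a / 2 * η ^ 2 - (σ * η - σ ^ 2 / (2 * a)) = (a * η - σ) ^ 2 / (2 * a) := by
    field_simp
    ring
  linarith [div_nonneg (sq_nonneg (a * η - σ)) (by positivity : (0 : ℝ) ≤ 2 * a)]

theorem mul_sub_sq_div_eq {a : ℝ} (ha : a ≠ 0) {σ η : ℝ} (hη : η = σ / a) :
    σ * η - σ ^ 2 / (2 * a) = a / 2 * η ^ 2 := by
  subst hη
  field_simp
  ring

end FenchelYoung

theorem dotProduct_inv_mul_mul_inv_mulVec {m R : Type*} [Fintype m] [DecidableEq m] [CommRing R]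
    {G : Matrix m m R} (hG : G.IsSymm) (M : Matrix m m R) (f : m → R) :
    f ⬝ᵥ (G⁻¹ * M * G⁻¹) *ᵥ f = G⁻¹ *ᵥ f ⬝ᵥ M *ᵥ G⁻¹ *ᵥ f := by
  rw [← mulVec_mulVec, ← mulVec_mulVec, dotProduct_mulVec, ← mulVec_transpose,
    transpose_nonsing_inv, hG.eq]

theorem IsLocalMax.isLocalMaxOn_of_le_comp {X Y R : Type*} [TopologicalSpace X]
    [TopologicalSpace Y] [Preorder R] {P : Y → R} {D : X → R} {φ : X → Y} {s : Set X} {z : X}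
    (hP : IsLocalMax P (φ z)) (hφ : ContinuousAt φ z) (hle : ∀ ζ ∈ s, D ζ ≤ P (φ ζ)) (heq : D z = P (φ z)) :
    IsLocalMaxOn D s z := by
  filter_upwards [(hP.comp_continuous hφ).on s, self_mem_nhdsWithin] with ζ hζ hζs
  exact heq ▸ (hle ζ hζs).trans hζ

section CanonicalDuality

variable {m ι κ : Type*} [Fintype ι] [Fintype κ]
  (A : Matrix m m ℝ) (Q : ι → Matrix m m ℝ) (B : κ → Matrix m m ℝ)

def dualMatrix (ζ : ι ⊕ κ → ℝ) : Matrix m m ℝ :=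
  A + ∑ i, ζ (Sum.inl i) • Q i + ∑ i, ζ (Sum.inr i) • B i

variable {A Q B} in
theorem dualMatrix_isSymm (hA : A.IsSymm) (hQ : ∀ i, (Q i).IsSymm) (hB : ∀ i, (B i).IsSymm)
    (ζ : ι ⊕ κ → ℝ) : (dualMatrix A Q B ζ).IsSymm := by
  simp only [IsSymm] at hA hQ hB ⊢
  simp only [dualMatrix, transpose_add, transpose_sum, transpose_smul, hA, hQ, hB]

theorem continuous_dualMatrix : Continuous (dualMatrix A Q B) := by
  unfold dualMatrix
  fun_prop

variable [Fintype m] (f : m → ℝ) (d : ι → ℝ) (c : κ → ℝ) (β : ℝ) (α : κ → ℝ)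

noncomputable def primal (x : m → ℝ) : ℝ :=
  (1/2) * (x ⬝ᵥ A *ᵥ x) - f ⬝ᵥ x
    + (1/β) * Real.log (1 + ∑ i, Real.exp (β * ((1/2) * (x ⬝ᵥ Q i *ᵥ x) + d i)))
    + ∑ i, (α i / 2) * ((1/2) * (x ⬝ᵥ B i *ᵥ x) + c i) ^ 2

noncomputable def logSumExpConjugate (τ : ι → ℝ) : ℝ :=
  (1/β) * negEntropy τ - ∑ i, d i * τ i

noncomputable def quadraticConjugate (σ : κ → ℝ) : ℝ :=
  ∑ i, σ i ^ 2 / (2 * α i) - ∑ i, c i * σ i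

noncomputable def dual [DecidableEq m] (ζ : ι ⊕ κ → ℝ) : ℝ :=
  -(1/2) * (f ⬝ᵥ (dualMatrix A Q B ζ)⁻¹ *ᵥ f)
    - logSumExpConjugate d β (fun i => ζ (Sum.inl i))
    - quadraticConjugate c α (fun i => ζ (Sum.inr i))

noncomputable def totalComplementary (x : m → ℝ) (ζ : ι ⊕ κ → ℝ) : ℝ :=
  (1/2) * (x ⬝ᵥ dualMatrix A Q B ζ *ᵥ x) - f ⬝ᵥ x
    - logSumExpConjugate d β (fun i => ζ (Sum.inl i))
    - quadraticConjugate c α (fun i => ζ (Sum.inr i))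

variable {A Q B f d c β α}

theorem dotProduct_dualMatrix_mulVec (ζ : ι ⊕ κ → ℝ) (x : m → ℝ) :
    x ⬝ᵥ dualMatrix A Q B ζ *ᵥ x = x ⬝ᵥ A *ᵥ x + ∑ i, ζ (Sum.inl i) * (x ⬝ᵥ Q i *ᵥ x)
      + ∑ i, ζ (Sum.inr i) * (x ⬝ᵥ B i *ᵥ x) := by
  simp only [dualMatrix, add_mulVec, sum_mulVec, smul_mulVec, dotProduct_add, dotProduct_sum,
    dotProduct_smul, smul_eq_mul]

theorem totalComplementary_eq (x : m → ℝ) (ζ : ι ⊕ κ → ℝ) :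
    totalComplementary A Q B f d c β α x ζ = (1/2) * (x ⬝ᵥ A *ᵥ x) - f ⬝ᵥ x
      + (∑ i, ζ (Sum.inl i) * ((1/2) * (x ⬝ᵥ Q i *ᵥ x) + d i)
          - (1/β) * negEntropy (fun i => ζ (Sum.inl i)))
      + ∑ i, (ζ (Sum.inr i) * ((1/2) * (x ⬝ᵥ B i *ᵥ x) + c i)
          - ζ (Sum.inr i) ^ 2 / (2 * α i)) := by
  simp only [totalComplementary, dotProduct_dualMatrix_mulVec, logSumExpConjugate,
    quadraticConjugate, Finset.sum_sub_distrib, mul_add, Finset.sum_add_distrib,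
    mul_left_comm (ζ _) (1/2 : ℝ), ← Finset.mul_sum, mul_comm (d _), mul_comm (c _)]
  ring

theorem totalComplementary_le_primal (hβ : 0 < β) (hα : ∀ i, 0 < α i) {ζ : ι ⊕ κ → ℝ}
    (hτ : ∀ i, 0 < ζ (Sum.inl i)) (hτ1 : ∑ i, ζ (Sum.inl i) < 1) (x : m → ℝ) :
    totalComplementary A Q B f d c β α x ζ ≤ primal A Q B f d c β α x := by
  rw [totalComplementary_eq, primal]
  gcongr _ + ?_ + ?_
  · exact sum_mul_sub_negEntropy_le hβ hτ hτ1 _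
  · exact Finset.sum_le_sum fun i _ => mul_sub_sq_div_le (hα i) _ _

theorem totalComplementary_eq_primal (hβ : β ≠ 0) (hα : ∀ i, α i ≠ 0) {ζ : ι ⊕ κ → ℝ}
    (hτ : ∀ i, 0 < ζ (Sum.inl i)) (hτ1 : ∑ i, ζ (Sum.inl i) < 1) {x : m → ℝ}
    (hξ : ∀ i, (1/2) * (x ⬝ᵥ Q i *ᵥ x) + d i
      = (1/β) * Real.log (ζ (Sum.inl i) / (1 - ∑ j, ζ (Sum.inl j))))
    (hη : ∀ i, (1/2) * (x ⬝ᵥ B i *ᵥ x) + c i = ζ (Sum.inr i) / α i) :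
    totalComplementary A Q B f d c β α x ζ = primal A Q B f d c β α x := by
  rw [totalComplementary_eq, primal, sum_mul_sub_negEntropy_eq hβ hτ hτ1 hξ]
  congr 1
  exact Finset.sum_congr rfl fun i _ => mul_sub_sq_div_eq (hα i) (hη i)

theorem dual_eq_totalComplementary [DecidableEq m] {ζ : ι ⊕ κ → ℝ}
    (hdet : (dualMatrix A Q B ζ).det ≠ 0) :
    dual A Q B f d c β α ζ
      = totalComplementary A Q B f d c β α ((dualMatrix A Q B ζ)⁻¹ *ᵥ f) ζ := by
  have hx : dualMatrix A Q B ζ *ᵥ (dualMatrix A Q B ζ)⁻¹ *ᵥ f = f := by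
    rw [mulVec_mulVec, mul_nonsing_inv _ (isUnit_iff_ne_zero.mpr hdet), one_mulVec]
  rw [dual, totalComplementary, hx, dotProduct_comm]
  ring

theorem continuousAt_dualMatrix_inv_mulVec [DecidableEq m] {ζ : ι ⊕ κ → ℝ}
    (hdet : (dualMatrix A Q B ζ).det ≠ 0) :
    ContinuousAt (fun ζ => (dualMatrix A Q B ζ)⁻¹ *ᵥ f) ζ := by
  have hinv : ContinuousAt Inv.inv (dualMatrix A Q B ζ) :=
    continuousAt_matrix_inv _ (Ring.inverse_eq_inv' (G₀ := ℝ) ▸ continuousAt_inv₀ hdet)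
  exact (continuous_id.matrix_mulVec continuous_const).continuousAt.comp
    (hinv.comp (continuous_dualMatrix A Q B).continuousAt)

end CanonicalDuality

theorem double_max_duality_primal_to_dual_general
    {n p r : ℕ}
    (A : Matrix (Fin n) (Fin n) ℝ) (hA : A.IsSymm)
    (Q : Fin p → Matrix (Fin n) (Fin n) ℝ) (hQ : ∀ i, (Q i).IsSymm)
    (B : Fin r → Matrix (Fin n) (Fin n) ℝ) (hB : ∀ i, (B i).IsSymm)
    (f : Fin n → ℝ) (d : Fin p → ℝ) (c : Fin r → ℝ)
    (β : ℝ) (hβ : 0 < β) (α : Fin r → ℝ) (hα : ∀ i, 0 < α i)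
    (Prim : (Fin n → ℝ) → ℝ)
    (hPrim : Prim = fun x => (1/2) * (x ⬝ᵥ A.mulVec x) - f ⬝ᵥ x
        + (1/β) * Real.log (1 + ∑ i, Real.exp (β * ((1/2) * (x ⬝ᵥ (Q i).mulVec x) + d i)))
        + ∑ i, (α i / 2) * ((1/2) * (x ⬝ᵥ (B i).mulVec x) + c i)^2)
    (Ga : ((Fin p ⊕ Fin r) → ℝ) → Matrix (Fin n) (Fin n) ℝ)
    (hGa : Ga = fun ζ => A + ∑ i, ζ (Sum.inl i) • Q i + ∑ i, ζ (Sum.inr i) • B i)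
    (Dual : ((Fin p ⊕ Fin r) → ℝ) → ℝ)
    (hDual : Dual = fun ζ => -(1/2) * (f ⬝ᵥ (Ga ζ)⁻¹.mulVec f)
        - ((1/β) * ((∑ i, ζ (Sum.inl i) * Real.log (ζ (Sum.inl i)))
            + (1 - ∑ i, ζ (Sum.inl i)) * Real.log (1 - ∑ i, ζ (Sum.inl i)))
          - ∑ i, d i * ζ (Sum.inl i))
        - (∑ i, (ζ (Sum.inr i))^2 / (2 * α i) - ∑ i, c i * ζ (Sum.inr i)))
    (zb : (Fin p ⊕ Fin r) → ℝ)
    (hpos : ∀ i, 0 < zb (Sum.inl i)) (hsum : ∑ i, zb (Sum.inl i) < 1)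
    (hdet : (Ga zb).det ≠ 0)
    (hcrit1 : ∀ i, (1/2) * (f ⬝ᵥ ((Ga zb)⁻¹ * Q i * (Ga zb)⁻¹).mulVec f) + d i
        = (1/β) * Real.log (zb (Sum.inl i) / (1 - ∑ j, zb (Sum.inl j))))
    (hcrit2 : ∀ i, (1/2) * (f ⬝ᵥ ((Ga zb)⁻¹ * B i * (Ga zb)⁻¹).mulVec f) + c i
        = zb (Sum.inr i) / α i)
    (xb : Fin n → ℝ) (hxb : xb = (Ga zb)⁻¹.mulVec f)
    (hmax : IsLocalMax Prim xb) :
    IsLocalMaxOn Dual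
      {ζ : (Fin p ⊕ Fin r) → ℝ | (∀ i, 0 < ζ (Sum.inl i)) ∧ (∑ i, ζ (Sum.inl i)) < 1 ∧
        (Ga ζ).det ≠ 0 ∧ ∀ x : Fin n → ℝ, x ≠ 0 → x ⬝ᵥ (Ga ζ).mulVec x < 0} zb ∧
    Prim xb = Dual zb := by
  obtain rfl : Prim = primal A Q B f d c β α := hPrim
  obtain rfl : Ga = dualMatrix A Q B := hGa
  obtain rfl : Dual = dual A Q B f d c β α := hDual
  subst hxb
  have hsymm := dualMatrix_isSymm hA hQ hB zb
  have heq :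
      primal A Q B f d c β α ((dualMatrix A Q B zb)⁻¹ *ᵥ f) = dual A Q B f d c β α zb := by
    rw [dual_eq_totalComplementary hdet,
      totalComplementary_eq_primal hβ.ne' (fun i => (hα i).ne') hpos hsum]
    · simpa only [dotProduct_inv_mul_mul_inv_mulVec hsymm] using hcrit1
    · simpa only [dotProduct_inv_mul_mul_inv_mulVec hsymm] using hcrit2
  refine ⟨hmax.isLocalMaxOn_of_le_comp (φ := fun ζ => (dualMatrix A Q B ζ)⁻¹ *ᵥ f)
    (continuousAt_dualMatrix_inv_mulVec hdet) (fun ζ hζ => ?_) heq.symm, heq⟩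
  rw [dual_eq_totalComplementary hζ.2.2.1]
  exact totalComplementary_le_primal hβ hα hζ.1 hζ.2.1 _

theorem double_max_duality_primal_to_dual
    {n p r : ℕ} (hn : 0 < n) (hp : 0 < p) (hr : 0 < r)
    (A : Matrix (Fin n) (Fin n) ℝ) (hA : A.IsSymm)
    (Q : Fin p → Matrix (Fin n) (Fin n) ℝ) (hQ : ∀ i, (Q i).IsSymm)
    (B : Fin r → Matrix (Fin n) (Fin n) ℝ) (hB : ∀ i, (B i).IsSymm)
    (f : Fin n → ℝ) (d : Fin p → ℝ) (c : Fin r → ℝ)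
    (β : ℝ) (hβ : 0 < β) (α : Fin r → ℝ) (hα : ∀ i, 0 < α i)
    (Prim : (Fin n → ℝ) → ℝ)
    (hPrim : Prim = fun x => (1/2) * (x ⬝ᵥ A.mulVec x) - f ⬝ᵥ x
        + (1/β) * Real.log (1 + ∑ i, Real.exp (β * ((1/2) * (x ⬝ᵥ (Q i).mulVec x) + d i)))
        + ∑ i, (α i / 2) * ((1/2) * (x ⬝ᵥ (B i).mulVec x) + c i)^2)
    (Ga : ((Fin p ⊕ Fin r) → ℝ) → Matrix (Fin n) (Fin n) ℝ)
    (hGa : Ga = fun ζ => A + ∑ i, ζ (Sum.inl i) • Q i + ∑ i, ζ (Sum.inr i) • B i)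
    (Dual : ((Fin p ⊕ Fin r) → ℝ) → ℝ)
    (hDual : Dual = fun ζ => -(1/2) * (f ⬝ᵥ (Ga ζ)⁻¹.mulVec f)
        - ((1/β) * ((∑ i, ζ (Sum.inl i) * Real.log (ζ (Sum.inl i)))
            + (1 - ∑ i, ζ (Sum.inl i)) * Real.log (1 - ∑ i, ζ (Sum.inl i)))
          - ∑ i, d i * ζ (Sum.inl i))
        - (∑ i, (ζ (Sum.inr i))^2 / (2 * α i) - ∑ i, c i * ζ (Sum.inr i)))
    (zb : (Fin p ⊕ Fin r) → ℝ)
    (hpos : ∀ i, 0 < zb (Sum.inl i)) (hsum : ∑ i, zb (Sum.inl i) < 1)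
    (hdet : (Ga zb).det ≠ 0)
    (hcrit1 : ∀ i, (1/2) * (f ⬝ᵥ ((Ga zb)⁻¹ * Q i * (Ga zb)⁻¹).mulVec f) + d i
        = (1/β) * Real.log (zb (Sum.inl i) / (1 - ∑ j, zb (Sum.inl j))))
    (hcrit2 : ∀ i, (1/2) * (f ⬝ᵥ ((Ga zb)⁻¹ * B i * (Ga zb)⁻¹).mulVec f) + c i
        = zb (Sum.inr i) / α i)
    (xb : Fin n → ℝ) (hxb : xb = (Ga zb)⁻¹.mulVec f)
    (hnegdef : ∀ x : Fin n → ℝ, x ≠ 0 → x ⬝ᵥ (Ga zb).mulVec x < 0)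
    (hmax : IsLocalMax Prim xb) :
    IsLocalMaxOn Dual
      {ζ : (Fin p ⊕ Fin r) → ℝ | (∀ i, 0 < ζ (Sum.inl i)) ∧ (∑ i, ζ (Sum.inl i)) < 1 ∧
        (Ga ζ).det ≠ 0 ∧ ∀ x : Fin n → ℝ, x ≠ 0 → x ⬝ᵥ (Ga ζ).mulVec x < 0} zb ∧
    Prim xb = Dual zb :=
  double_max_duality_primal_to_dual_general A hA Q hQ B hB f d c β hβ α hα Prim hPrim Ga hGa Dual
    hDual zb hpos hsum hdet hcrit1 hcrit2 xb hxb hmax
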